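/- arXiv:1803.09521 — 3 statements merged into one kernel-verified Lean document; each statement's English description precedes it below -/
import Mathlib

section
/- Let (𝒜,T) be a Tits arrangement associated to a root system R and let K be a chamber with root basis B^K. Then R is the disjoint union of R⁺ = R ∩ ∑_{α∈B^K} ℝ_{≥0}·α and R⁻ = R ∩ ∑_{α∈B^K} ℝ_{≤0}·α; that is, every root is a non-negative or non-positive linear combination of B^K, and no root is both. -/
open Set

noncomputable section

section Arrangements

variable {V : Type*} [AddCommGroup V] [Module ℝ V] [TopologicalSpace V]

/-- The kernel of a linear functional, as a subset of `V`. -/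
def dualKer (α : Module.Dual ℝ V) : Set V := {v | α v = 0}

/-- A linear hyperplane: the kernel of a nonzero linear functional. -/
def IsLinearHyperplane (H : Set V) : Prop :=
  ∃ α : Module.Dual ℝ V, α ≠ 0 ∧ H = dualKer α

/-- A hyperplane arrangement `(𝒜, T)`: `T` is an open convex cone, `𝒜` a set of linear
hyperplanes, each meeting `T`, which is locally finite in `T`. -/
structure IsHyperplaneArrangement (𝒜 : Set (Set V)) (T : Set V) : Prop where
  T_nonempty : T.Nonempty
  T_open : IsOpen T
  T_convex : Convex ℝ T
  T_cone : ∀ x ∈ T, ∀ c : ℝ, 0 < c → c • x ∈ T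
  hyperplanes : ∀ H ∈ 𝒜, IsLinearHyperplane H
  meets : ∀ H ∈ 𝒜, (H ∩ T).Nonempty
  locallyFinite : ∀ x ∈ T, ∃ U : Set V, IsOpen U ∧ x ∈ U ∧ U ⊆ T ∧
    {H ∈ 𝒜 | (H ∩ U).Nonempty}.Finite

/-- The chambers: connected components of `T \ ⋃ 𝒜`. -/
def chambersOf (𝒜 : Set (Set V)) (T : Set V) : Set (Set V) :=
  {K | ∃ x ∈ T \ ⋃₀ 𝒜, K = connectedComponentIn (T \ ⋃₀ 𝒜) x}

/-- `H` is a wall of the chamber `K`: a hyperplane missing `K` such that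
`H ∩ cl(K)` spans `H`. -/
def IsWall (K H : Set V) : Prop :=
  IsLinearHyperplane H ∧ H ∩ K = ∅ ∧
    (Submodule.span ℝ (H ∩ closure K) : Set V) = H

/-- An open simplicial cone: `⋂_{α ∈ B} α⁻¹(ℝ_{>0})` for a basis `B` of the dual space. -/
def IsOpenSimplicialCone (K : Set V) : Prop :=
  ∃ b : Module.Basis (Fin (Module.finrank ℝ V)) ℝ (Module.Dual ℝ V),
    K = {v | ∀ i, 0 < b i v}

/-- A Tits arrangement: a hyperplane arrangement all of whose chambers are open simplicial
cones (simplicial) and such that every wall of every chamber belongs to `𝒜` (thin). -/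
structure IsTitsArrangement (𝒜 : Set (Set V)) (T : Set V) extends
    IsHyperplaneArrangement 𝒜 T : Prop where
  simplicial : ∀ K ∈ chambersOf 𝒜 T, IsOpenSimplicialCone K
  thin : ∀ K ∈ chambersOf 𝒜 T, ∀ H : Set V, IsWall K H → H ∈ 𝒜

/-- `R` is a root system with associated arrangement `𝒜`: `0 ∉ R`, `R = -R` and
`𝒜 = {ker α | α ∈ R}`. -/
def IsAssociatedRootSystem (𝒜 : Set (Set V)) (R : Set (Module.Dual ℝ V)) : Prop :=
  (0 : Module.Dual ℝ V) ∉ R ∧ (∀ α ∈ R, -α ∈ R) ∧ 𝒜 = {H | ∃ α ∈ R, H = dualKer α}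

/-- The root basis `B^K` of a chamber `K`. -/
def rootBasisOf (R : Set (Module.Dual ℝ V)) (K : Set V) : Set (Module.Dual ℝ V) :=
  {α ∈ R | IsWall K (dualKer α) ∧ ∀ x ∈ K, 0 < α x}

/-- `β` is a non-negative real linear combination of elements of `B`. -/
def InNNRealSpan (B : Set (Module.Dual ℝ V)) (β : Module.Dual ℝ V) : Prop :=
  ∃ (s : Finset (Module.Dual ℝ V)) (c : Module.Dual ℝ V → ℝ),
    ↑s ⊆ B ∧ (∀ α ∈ s, 0 ≤ c α) ∧ β = ∑ α ∈ s, c α • α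

/-- `β` is a non-negative integral linear combination of elements of `B`. -/
def InNatSpan (B : Set (Module.Dual ℝ V)) (β : Module.Dual ℝ V) : Prop :=
  ∃ (s : Finset (Module.Dual ℝ V)) (c : Module.Dual ℝ V → ℕ),
    ↑s ⊆ B ∧ β = ∑ α ∈ s, (c α : ℝ) • α

/-- `β` is an integral linear combination of elements of `B`. -/
def InIntSpan (B : Set (Module.Dual ℝ V)) (β : Module.Dual ℝ V) : Prop :=
  ∃ (s : Finset (Module.Dual ℝ V)) (c : Module.Dual ℝ V → ℤ),
    ↑s ⊆ B ∧ β = ∑ α ∈ s, (c α : ℝ) • α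

/-- The crystallographic property: `R ⊆ ±∑_{α ∈ B^K} ℕ₀ α` for every chamber `K`. -/
def IsCrystallographic (𝒜 : Set (Set V)) (T : Set V) (R : Set (Module.Dual ℝ V)) : Prop :=
  ∀ K ∈ chambersOf 𝒜 T, ∀ β ∈ R,
    InNatSpan (rootBasisOf R K) β ∨ InNatSpan (rootBasisOf R K) (-β)

/-- The chamber complex `𝒮(𝒜,T)`. -/
def chamberComplexOf (𝒜 : Set (Set V)) (T : Set V) : Set (Set V) :=
  {S | ∃ K ∈ chambersOf 𝒜 T, ∃ W : Set (Set V),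
    (∀ H ∈ W, IsWall K H) ∧ S = closure K ∩ ⋂₀ W}

/-- `(𝒜,T)` is `k`-spherical: every simplex of the chamber complex of codimension `k`
meets `T`. -/
def IsKSpherical (𝒜 : Set (Set V)) (T : Set V) (k : ℕ) : Prop :=
  ∀ S ∈ chamberComplexOf 𝒜 T,
    Module.finrank ℝ (Submodule.span ℝ S) = Module.finrank ℝ V - k → (S ∩ T).Nonempty

/-- A reduced root system: `R ∩ ℝα = {±α}` for every `α ∈ R`. -/
def IsReducedRS (R : Set (Module.Dual ℝ V)) : Prop :=
  ∀ α ∈ R, {β ∈ R | ∃ c : ℝ, β = c • α} = {α, -α}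

/-- The hyperplane `H` separates `K` and `K'`. -/
def SeparatesH (H K K' : Set V) : Prop :=
  ∃ α : Module.Dual ℝ V, H = dualKer α ∧ (∀ x ∈ K, 0 < α x) ∧ ∀ x ∈ K', α x < 0

/-- The set `S(K,K')` of hyperplanes of `𝒜` separating `K` and `K'`. -/
def sepSet (𝒜 : Set (Set V)) (K K' : Set V) : Set (Set V) :=
  {H ∈ 𝒜 | SeparatesH H K K'}

/-- The reduction of a set of functionals: the shortest elements on each line. -/
def reducedOf (S : Set (Module.Dual ℝ V)) : Set (Module.Dual ℝ V) :=
  {β ∈ S | ∀ γ ∈ S, ∀ c : ℝ, γ = c • β → 1 ≤ |c|}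

end Arrangements

/-- The standard real vector space `ℝ^r`. -/
abbrev Vr (r : ℕ) : Type := Fin r → ℝ

/-!
A root `β` has no zero on the connected chamber `K`, so it is either positive or negative on `K`;
by `R = -R` it suffices to treat `β > 0` on `K`. Write `K = {v | ∀ i, 0 < eᵢ* v}` for a basis `e`
of `V`. Each `ker eᵢ*` is a wall of `K`, hence lies in `𝒜` and is the kernel of a root; choosing
its sign, `eᵢ*` is a positive multiple of an element of `B^K`. Expanding `β = ∑ β(eᵢ) eᵢ*`, the
coefficients `β(eᵢ)` are non-negative because `eᵢ` lies in the closure of `K`. Conversely every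
non-negative combination of `B^K` is `≥ 0` on `K`, so `β` and `-β` cannot both be of this form.
-/

open Module

theorem IsPreconnected.pos_or_neg_of_ne_zero {X : Type*} [TopologicalSpace X] {s : Set X}
    (hs : IsPreconnected s) {f : X → ℝ} (hf : Continuous f) (hf0 : ∀ x ∈ s, f x ≠ 0) :
    (∀ x ∈ s, 0 < f x) ∨ ∀ x ∈ s, f x < 0 := by
  have hcover : s ⊆ f ⁻¹' Ioi 0 ∪ f ⁻¹' Iio 0 := fun x hx => (hf0 x hx).lt_or_gt.symm
  have hdisj : Disjoint (f ⁻¹' Ioi 0) (f ⁻¹' Iio 0) :=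
    (Ioi_disjoint_Iio_same (a := (0 : ℝ))).preimage f
  exact hs.subset_or_subset (isOpen_Ioi.preimage hf) (isOpen_Iio.preimage hf) hdisj hcover

theorem Module.Dual.exists_eq_smul_of_ker_le {𝕜 E : Type*} [Field 𝕜] [AddCommGroup E]
    [Module 𝕜 E] {φ α : Dual 𝕜 E} (h : LinearMap.ker α ≤ LinearMap.ker φ) :
    ∃ c : 𝕜, φ = c • α := by
  have hspan : φ ∈ Submodule.span 𝕜 (range fun _ : Unit => α) :=
    mem_span_of_iInf_ker_le_ker (by simpa using h)
  obtain ⟨c, hc⟩ := Submodule.mem_span_singleton.mp (by simpa using hspan)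
  exact ⟨c, hc.symm⟩

section Cones

variable {V : Type*} [AddCommGroup V] [Module ℝ V]

theorem dualKer_smul {c : ℝ} (hc : c ≠ 0) (α : Dual ℝ V) : dualKer (c • α) = dualKer α := by
  ext v
  simp [dualKer, hc]

theorem inNNRealSpan_of_mem_hull {B : Set (Dual ℝ V)} {β : Dual ℝ V}
    (h : β ∈ PointedCone.hull ℝ B) : InNNRealSpan B β := by
  obtain ⟨c, s, hsB, -, hβ⟩ := Submodule.mem_span_iff_exists_finset_subset.mp h
  exact ⟨s, fun α => c α, hsB, fun α _ => (c α).2, hβ.symm⟩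

theorem InNNRealSpan.nonneg_of_forall_pos {B : Set (Dual ℝ V)} {K : Set V}
    (hB : ∀ α ∈ B, ∀ x ∈ K, 0 < α x) {β : Dual ℝ V} (hβ : InNNRealSpan B β) {x : V}
    (hx : x ∈ K) : 0 ≤ β x := by
  obtain ⟨s, c, hsB, hc, rfl⟩ := hβ
  rw [LinearMap.sum_apply]
  exact Finset.sum_nonneg fun α hα => mul_nonneg (hc α hα) (hB α (hsB hα) x hx).le

end Cones

namespace Module.Basis

variable {V ι : Type*} [AddCommGroup V] [Module ℝ V]

def simplicialCone (e : Basis ι ℝ V) : Set V := {v | ∀ i, 0 < e.coord i v}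

variable (e : Basis ι ℝ V)

theorem coord_apply_self_nonneg (j i : ι) : 0 ≤ e.coord i (e j) := by
  classical
  simp only [coord_apply, repr_self, Finsupp.single_apply]
  split_ifs <;> norm_num

variable [Fintype ι]

theorem add_smul_sum_mem_simplicialCone {v : V} (hv : ∀ i, 0 ≤ e.coord i v) {ε : ℝ}
    (hε : 0 < ε) : v + ε • ∑ k, e k ∈ e.simplicialCone := by
  intro i
  classical
  simp only [map_add, map_smul, map_sum, coord_apply, repr_self, Finsupp.single_apply,
    Finset.sum_ite_eq', Finset.mem_univ, if_true, smul_eq_mul, mul_one]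
  linarith [(hv i).trans_eq (e.coord_apply i v)]

theorem sum_mem_simplicialCone : ∑ k, e k ∈ e.simplicialCone := by
  simpa using e.add_smul_sum_mem_simplicialCone (v := 0) (by simp) one_pos

theorem dual_apply_nonneg_of_forall_pos {β : Dual ℝ V}
    (hβ : ∀ v ∈ e.simplicialCone, 0 < β v) (j : ι) : 0 ≤ β (e j) := by
  by_contra! hneg
  have hsum := hβ _ e.sum_mem_simplicialCone
  set ε := -β (e j) / β (∑ k, e k)
  have hε : 0 < ε := div_pos (neg_pos.mpr hneg) hsum
  have := hβ _ (e.add_smul_sum_mem_simplicialCone (e.coord_apply_self_nonneg j) hε)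
  rw [map_add, map_smul, smul_eq_mul, div_mul_cancel₀ _ hsum.ne'] at this
  linarith

variable [TopologicalSpace V] [ContinuousAdd V] [ContinuousSMul ℝ V]

theorem mem_closure_simplicialCone {v : V} (hv : ∀ i, 0 ≤ e.coord i v) :
    v ∈ closure e.simplicialCone := by
  have hlim : Filter.Tendsto (fun ε : ℝ => v + ε • ∑ k, e k) (nhdsWithin 0 (Ioi 0)) (nhds v) := by
    have hcont : Continuous fun ε : ℝ => v + ε • ∑ k, e k := by fun_prop
    simpa using (hcont.tendsto 0).mono_left nhdsWithin_le_nhds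
  exact mem_closure_of_tendsto hlim
    (eventually_nhdsWithin_of_forall fun ε hε => e.add_smul_sum_mem_simplicialCone hv hε)

theorem isWall_dualKer_coord (i : ι) : IsWall e.simplicialCone (dualKer (e.coord i)) := by
  classical
  refine ⟨⟨e.coord i, fun h => by simpa using congr($h (e i)), rfl⟩, ?_, ?_⟩
  · refine eq_empty_of_forall_notMem fun x ⟨hx0, hxK⟩ => ?_
    exact (hxK i).ne' hx0
  · refine subset_antisymm (Submodule.span_le.mpr inter_subset_left :
      Submodule.span ℝ _ ≤ LinearMap.ker (e.coord i)) fun x hx => ?_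
    rw [SetLike.mem_coe, ← e.sum_repr x]
    refine Submodule.sum_mem _ fun j _ => ?_
    by_cases hji : j = i
    · subst hji
      simp [show e.repr x j = 0 from hx]
    · refine Submodule.smul_mem _ _ (Submodule.subset_span ⟨?_, ?_⟩)
      · simp [dualKer, Ne.symm hji]
      · exact e.mem_closure_simplicialCone (e.coord_apply_self_nonneg j)

end Module.Basis

theorem IsOpenSimplicialCone.exists_basis {V : Type*} [AddCommGroup V] [Module ℝ V]
    [TopologicalSpace V] [FiniteDimensional ℝ V] {K : Set V} (hK : IsOpenSimplicialCone K) :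
    ∃ e : Basis (Fin (finrank ℝ V)) ℝ V, K = e.simplicialCone := by
  obtain ⟨b, rfl⟩ := hK
  let e := b.dualBasis.map (evalEquiv ℝ V).symm
  have hcoord : ∀ i, e.coord i = b i := fun i => e.ext fun j => by
    rw [Basis.coord_apply, Basis.repr_self, Finsupp.single_apply, Basis.map_apply,
      apply_evalEquiv_symm_apply, Basis.dualBasis_apply_self]
    exact if_congr eq_comm rfl rfl
  exact ⟨e, by simp [Basis.simplicialCone, hcoord]⟩

section Chambers

variable {V : Type*} [TopologicalSpace V] {𝒜 : Set (Set V)} {T K : Set V}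

theorem nonempty_of_mem_chambersOf (hK : K ∈ chambersOf 𝒜 T) : K.Nonempty := by
  obtain ⟨x, hx, rfl⟩ := hK
  exact ⟨x, mem_connectedComponentIn hx⟩

theorem isPreconnected_of_mem_chambersOf (hK : K ∈ chambersOf 𝒜 T) : IsPreconnected K := by
  obtain ⟨x, -, rfl⟩ := hK
  exact isPreconnected_connectedComponentIn

theorem subset_diff_of_mem_chambersOf (hK : K ∈ chambersOf 𝒜 T) : K ⊆ T \ ⋃₀ 𝒜 := by
  obtain ⟨x, -, rfl⟩ := hK
  exact connectedComponentIn_subset _ _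

variable [AddCommGroup V] [Module ℝ V] {R : Set (Dual ℝ V)}

theorem pos_or_neg_of_mem_chambersOf [IsTopologicalAddGroup V] [ContinuousSMul ℝ V] [T2Space V]
    [FiniteDimensional ℝ V] (hR : IsAssociatedRootSystem 𝒜 R) (hK : K ∈ chambersOf 𝒜 T)
    {β : Dual ℝ V} (hβ : β ∈ R) : (∀ x ∈ K, 0 < β x) ∨ ∀ x ∈ K, β x < 0 := by
  refine (isPreconnected_of_mem_chambersOf hK).pos_or_neg_of_ne_zero
    β.continuous_of_finiteDimensional fun x hx hβx => ?_
  have hβ𝒜 : dualKer β ∈ 𝒜 := by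
    rw [hR.2.2]
    exact ⟨β, hβ, rfl⟩
  exact (subset_diff_of_mem_chambersOf hK hx).2 ⟨dualKer β, hβ𝒜, hβx⟩

theorem mem_hull_rootBasisOf_of_isWall [FiniteDimensional ℝ V] (hTits : IsTitsArrangement 𝒜 T)
    (hR : IsAssociatedRootSystem 𝒜 R) (hK : K ∈ chambersOf 𝒜 T) {φ : Dual ℝ V}
    (hwall : IsWall K (dualKer φ)) (hφ : ∀ x ∈ K, 0 < φ x) :
    φ ∈ PointedCone.hull ℝ (rootBasisOf R K) := by
  have hφ𝒜 := hTits.thin K hK _ hwall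
  rw [hR.2.2] at hφ𝒜
  obtain ⟨α, hαR, hker⟩ := hφ𝒜
  obtain ⟨c, hc⟩ := Dual.exists_eq_smul_of_ker_le (hker.symm.subset : dualKer α ⊆ dualKer φ)
  obtain ⟨x, hx⟩ := nonempty_of_mem_chambersOf hK
  obtain ⟨γ, hγR, t, ht, rfl⟩ : ∃ γ ∈ R, ∃ t : ℝ, 0 < t ∧ φ = t • γ := by
    rcases lt_trichotomy c 0 with hc0 | rfl | hc0
    · exact ⟨-α, hR.2.1 α hαR, -c, neg_pos.mpr hc0, by rw [hc, neg_smul_neg]⟩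
    · exact absurd (hφ x hx) (by simp [hc])
    · exact ⟨α, hαR, c, hc0, hc⟩
  have hγK : ∀ y ∈ K, 0 < γ y := fun y hy => pos_of_mul_pos_right (hφ y hy) ht.le
  rw [dualKer_smul ht.ne'] at hwall
  exact PointedCone.smul_mem _ ht.le (PointedCone.subset_hull ⟨hγR, hwall, hγK⟩)

theorem inNNRealSpan_rootBasisOf_of_pos [ContinuousAdd V] [ContinuousSMul ℝ V]
    [FiniteDimensional ℝ V] (hTits : IsTitsArrangement 𝒜 T) (hR : IsAssociatedRootSystem 𝒜 R)
    (hK : K ∈ chambersOf 𝒜 T) {β : Dual ℝ V} (hβ : ∀ x ∈ K, 0 < β x) :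
    InNNRealSpan (rootBasisOf R K) β := by
  obtain ⟨e, rfl⟩ := (hTits.simplicial _ hK).exists_basis
  refine inNNRealSpan_of_mem_hull ?_
  rw [← e.sum_dual_apply_smul_coord β]
  refine Submodule.sum_mem _ fun j _ =>
    PointedCone.smul_mem _ (e.dual_apply_nonneg_of_forall_pos hβ j) ?_
  exact mem_hull_rootBasisOf_of_isWall hTits hR hK (e.isWall_dualKer_coord j) fun x hx => hx j

end Chambers

theorem statement_0_general {r : ℕ} (𝒜 : Set (Set (Vr r))) (T : Set (Vr r))
    (R : Set (Module.Dual ℝ (Vr r)))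
    (hTits : IsTitsArrangement 𝒜 T) (hR : IsAssociatedRootSystem 𝒜 R)
    (K : Set (Vr r)) (hK : K ∈ chambersOf 𝒜 T) :
    ∀ β ∈ R, Xor' (InNNRealSpan (rootBasisOf R K) β)
      (InNNRealSpan (rootBasisOf R K) (-β)) := by
  intro β hβ
  obtain ⟨x, hx⟩ := nonempty_of_mem_chambersOf hK
  have hB : ∀ α ∈ rootBasisOf R K, ∀ y ∈ K, 0 < α y := fun α hα => hα.2.2
  rcases pos_or_neg_of_mem_chambersOf hR hK hβ with hpos | hneg
  · refine Or.inl ⟨inNNRealSpan_rootBasisOf_of_pos hTits hR hK hpos, fun hspan => ?_⟩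
    linarith [hspan.nonneg_of_forall_pos hB hx, hpos x hx, LinearMap.neg_apply β x]
  · have hpos' : ∀ y ∈ K, 0 < (-β) y := fun y hy => neg_pos.mpr (hneg y hy)
    refine Or.inr ⟨inNNRealSpan_rootBasisOf_of_pos hTits hR hK hpos', fun hspan => ?_⟩
    linarith [hspan.nonneg_of_forall_pos hB hx, hneg x hx]

/-- Lemma on positive/negative roots: for a Tits arrangement `(𝒜,T)`
associated to a root system `R` and a chamber `K`, every root is a non-negative or a
non-positive real linear combination of the root basis `B^K`, and no root is both;
i.e. `R` is the disjoint union of `R⁺` and `R⁻`. -/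
theorem statement_0 {r : ℕ} (hr : 1 ≤ r) (𝒜 : Set (Set (Vr r))) (T : Set (Vr r))
    (R : Set (Module.Dual ℝ (Vr r)))
    (hTits : IsTitsArrangement 𝒜 T) (hR : IsAssociatedRootSystem 𝒜 R)
    (K : Set (Vr r)) (hK : K ∈ chambersOf 𝒜 T) :
    ∀ β ∈ R, Xor' (InNNRealSpan (rootBasisOf R K) β)
      (InNNRealSpan (rootBasisOf R K) (-β)) :=
  statement_0_general 𝒜 T R hTits hR K hK
end
end

section
/- Let (𝒜,T) be a crystallographic Tits arrangement with respect to R. Then the Cartan graph 𝒞(𝒜,T,R) is simply connected: for every chamber K, the only morphism in Hom(K,K) of its Weyl groupoid is the identity. -/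
open Set

noncomputable section

section CartanGraphs

/-- A generalized Cartan matrix. -/
def IsGCM {I : Type*} (C : Matrix I I ℤ) : Prop :=
  (∀ i, C i i = 2) ∧ (∀ i j, i ≠ j → C i j ≤ 0) ∧
    ∀ i j, i ≠ j → C i j = 0 → C j i = 0

variable {I A : Type*} [Fintype I] [DecidableEq I]

/-- The reflection `σ_i` attached to a generalized Cartan matrix, acting on `ℤ^I`;
on the standard basis it is `σ_i(α_j) = α_j - c_{ij} α_i`. -/
def gcmSigma (C : Matrix I I ℤ) (i : I) : (I → ℤ) → (I → ℤ) :=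
  fun v k => v k - if k = i then ∑ j, C i j * v j else 0

/-- `WeylHom ρ C a b f` : `f` is a morphism from `a` to `b` of the Weyl groupoid of the
Cartan graph `(I, A, ρ, C)`, i.e. a composite of maps `σ_i^c ∈ Hom(c, ρ_i(c))`. -/
inductive WeylHom (ρ : I → A → A) (C : A → Matrix I I ℤ) :
    A → A → ((I → ℤ) → (I → ℤ)) → Prop
  | id (a : A) : WeylHom ρ C a a _root_.id
  | comp {a b : A} {f : (I → ℤ) → (I → ℤ)} (i : I) :
      WeylHom ρ C a b f → WeylHom ρ C a (ρ i b) (gcmSigma (C b) i ∘ f)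

/-- The axioms of a Cartan graph: `A` nonempty, all `C^a` generalized Cartan matrices,
(C1) each `ρ_i` an involution, (C2) `c^a_{ij} = c^{ρ_i(a)}_{ij}`. -/
def IsCartanGraph (ρ : I → A → A) (C : A → Matrix I I ℤ) : Prop :=
  Nonempty A ∧ (∀ a, IsGCM (C a)) ∧ (∀ i, Function.Involutive (ρ i)) ∧
    ∀ a i j, C a i j = C (ρ i a) i j

/-- Connectedness: all Hom-sets of the Weyl groupoid are nonempty. -/
def CGConnected (ρ : I → A → A) (C : A → Matrix I I ℤ) : Prop :=
  ∀ a b : A, ∃ f, WeylHom ρ C a b f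

/-- Simple connectedness: `Hom(a,a) = {id}` for every object `a`. -/
def CGSimplyConnected (ρ : I → A → A) (C : A → Matrix I I ℤ) : Prop :=
  ∀ (a : A) (f : (I → ℤ) → (I → ℤ)), WeylHom ρ C a a f → f = _root_.id

/-- The set of real roots at `a`: all images of standard basis vectors under morphisms
into `a`. -/
def realRootsAt (ρ : I → A → A) (C : A → Matrix I I ℤ) (a : A) : Set (I → ℤ) :=
  {v | ∃ (b : A) (f : (I → ℤ) → (I → ℤ)) (j : I), WeylHom ρ C b a f ∧ v = f (Pi.single j 1)}

/-- A root system of type `𝒞 = (I, A, ρ, C)`: axioms (R1)-(R4). -/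
def IsRootSystemOfType (ρ : I → A → A) (C : A → Matrix I I ℤ)
    (R : A → Set (I → ℤ)) : Prop :=
  (∀ a, R a = {v ∈ R a | ∀ i, 0 ≤ v i} ∪ (fun v => -v) '' {v ∈ R a | ∀ i, 0 ≤ v i}) ∧
  (∀ (a : A) (i : I), {v ∈ R a | ∃ n : ℤ, v = n • Pi.single i 1} =
      {Pi.single i 1, -Pi.single i 1}) ∧
  (∀ (a : A) (i : I), gcmSigma (C a) i '' R a = R (ρ i a)) ∧
  ∀ (a : A) (i j : I), i ≠ j →
    {v ∈ R a | ∃ m n : ℕ, v = (m : ℤ) • Pi.single i 1 + (n : ℤ) • Pi.single j 1}.Finite →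
    (ρ i ∘ ρ j)^[{v ∈ R a |
        ∃ m n : ℕ, v = (m : ℤ) • Pi.single i 1 + (n : ℤ) • Pi.single j 1}.ncard] a = a

end CartanGraphs

/-!
Realize the Weyl groupoid on the root bases: at the chamber `K`, send `v ∈ ℤ^r` to
`∑ vᵢ αᵢᴷ`. The relations `βⁱⱼ = αⱼ - cᴷᵢⱼ αᵢ` and `βⁱᵢ = -αᵢ` say precisely that each
`σᵢᴷ` intertwines the realizations at `K` and `ρᵢ(K)`, hence so does every morphism. A loop
`f ∈ Hom(K, K)` thus satisfies `∑ (f v)ᵢ αᵢᴷ = ∑ vᵢ αᵢᴷ`, and `f = id` because `Bᴷ` is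
linearly independent: every coordinate hyperplane of the simplicial cone `K` is a wall, hence
by thinness the kernel of a root, so the `r` elements of `Bᴷ` span the dual space.
-/

open Module

section WeylInvariance

variable {ι A M : Type*} [Fintype ι] [DecidableEq ι] [AddCommGroup M]

theorem sum_gcmSigma_smul (C : Matrix ι ι ℤ) (i : ι) {e e' : ι → M} (he'i : e' i = -e i)
    (he' : ∀ j, e' j = e j - C i j • e i) (v : ι → ℤ) :
    ∑ k, gcmSigma C i v k • e' k = ∑ k, v k • e k := by
  have hsum : ∑ k, v k • e' k = ∑ k, v k • e k - (∑ k, C i k * v k) • e i := by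
    simp only [he', smul_sub, Finset.sum_sub_distrib, Finset.sum_smul, mul_comm (C i _), mul_smul]
  simp only [gcmSigma, sub_smul, Finset.sum_sub_distrib, ite_smul, zero_smul,
    Finset.sum_ite_eq', Finset.mem_univ, if_true, hsum, he'i, smul_neg]
  abel

variable {ρ : ι → A → A} {C : A → Matrix ι ι ℤ} {e : A → ι → M}

theorem WeylHom.sum_smul_eq (he_self : ∀ i a, e (ρ i a) i = -e a i)
    (he : ∀ a i j, e (ρ i a) j = e a j - C a i j • e a i) {a c : A}
    {f : (ι → ℤ) → (ι → ℤ)} (hf : WeylHom ρ C a c f) (v : ι → ℤ) :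
    ∑ k, f v k • e c k = ∑ k, v k • e a k := by
  induction hf with
  | id => rfl
  | comp i _ ih => exact (sum_gcmSigma_smul _ i (he_self i _) (he _ i) _).trans ih

theorem cgSimplyConnected_of_linearIndependent (he_self : ∀ i a, e (ρ i a) i = -e a i)
    (he : ∀ a i j, e (ρ i a) j = e a j - C a i j • e a i)
    (hli : ∀ a, LinearIndependent ℤ (e a)) : CGSimplyConnected ρ C := by
  intro a f hf
  funext v i
  exact Fintype.linearIndependent_iffₛ.mp (hli a) _ _ (hf.sum_smul_eq he_self he v) i

end WeylInvariance

section SimplicialCone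

variable {V ι : Type*} [AddCommGroup V] [Module ℝ V] [TopologicalSpace V] [ContinuousAdd V]
  [ContinuousSMul ℝ V] [FiniteDimensional ℝ V] [Fintype ι] [DecidableEq ι]

theorem isWall_dualKer_basis (b : Basis ι ℝ (Dual ℝ V)) (j : ι) :
    IsWall {v | ∀ i, 0 < b i v} (dualKer (b j)) := by
  set K : Set V := {v | ∀ i, 0 < b i v}
  set E : Basis ι ℝ V := b.dualBasis.map (evalEquiv ℝ V).symm
  have hbE : ∀ i k, b i (E k) = if k = i then 1 else 0 := by
    intro i k
    simp [E, Finsupp.single_apply, eq_comm]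
  have hrepr : ∀ x, ∑ k, b k x • E k = x := fun x => by
    simpa [E] using E.sum_repr x
  have hcl : ∀ x, (∀ i, 0 ≤ b i x) → x ∈ closure K := by
    intro x hx
    have hw : ∀ i, b i (∑ k, E k) = 1 := by simp [hbE]
    have hseg : openSegment ℝ x (∑ k, E k) ⊆ K := by
      rintro _ ⟨s, t, hs, ht, -, rfl⟩ i
      simp only [map_add, map_smul, hw, smul_eq_mul, mul_one]
      nlinarith [hx i]
    exact closure_mono hseg (segment_subset_closure_openSegment (left_mem_segment ℝ x _))
  refine ⟨⟨b j, b.ne_zero j, rfl⟩, ?_, Set.Subset.antisymm ?_ ?_⟩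
  · refine Set.eq_empty_iff_forall_notMem.mpr fun x ⟨hx, hxK⟩ => ?_
    exact (hxK j).ne' hx
  · exact Submodule.span_le.mpr (fun x hx => hx.1 : _ ⊆ (LinearMap.ker (b j) : Set V))
  · intro x hx
    rw [← hrepr x]
    refine Submodule.sum_mem _ fun k _ => ?_
    by_cases hkj : k = j
    · subst hkj
      simp [show b k x = 0 from hx]
    · refine Submodule.smul_mem _ _ (Submodule.subset_span ⟨?_, hcl _ fun i => ?_⟩)
      · simp [dualKer, hbE, hkj]
      · rw [hbE]; split_ifs <;> norm_num

end SimplicialCone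

theorem dualKer_neg {V : Type*} [AddCommGroup V] [Module ℝ V] (α : Dual ℝ V) :
    dualKer (-α) = dualKer α := by
  ext x
  simp [dualKer]

section RootBasis

variable {V : Type*} [AddCommGroup V] [Module ℝ V] [TopologicalSpace V]
  {𝒜 : Set (Set V)} {T K : Set V} {R : Set (Dual ℝ V)}

theorem mem_span_rootBasisOf_of_isWall (hTits : IsTitsArrangement 𝒜 T)
    (hR : IsAssociatedRootSystem 𝒜 R) (hK : K ∈ chambersOf 𝒜 T) {β : Dual ℝ V}
    (hwall : IsWall K (dualKer β)) (hpos : ∀ x ∈ K, 0 < β x) :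
    β ∈ Submodule.span ℝ (rootBasisOf R K) := by
  obtain ⟨α, hαR, hker⟩ : ∃ α ∈ R, dualKer β = dualKer α := by
    simpa [hR.2.2] using hTits.thin K hK _ hwall
  obtain ⟨t, rfl⟩ : ∃ t : ℝ, t • β = α := by
    refine Submodule.mem_span_singleton.mp ?_
    have hle : ⨅ _ : Unit, LinearMap.ker β ≤ LinearMap.ker α := by
      intro x hx
      have hx : x ∈ dualKer β := by simpa [dualKer] using hx
      rw [hker] at hx
      exact hx
    simpa using mem_span_of_iInf_ker_le_ker hle
  have ht : t ≠ 0 := by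
    rintro rfl
    exact hR.1 (by simpa using hαR)
  rcases ht.lt_or_gt with ht | ht
  · have hmem : -(t • β) ∈ rootBasisOf R K := by
      refine ⟨hR.2.1 _ hαR, by rwa [dualKer_neg, ← hker], fun x hx => ?_⟩
      simpa using mul_neg_of_neg_of_pos ht (hpos x hx)
    convert Submodule.smul_mem _ (-t⁻¹) (Submodule.subset_span hmem) using 1
    rw [smul_neg, neg_smul, neg_neg, smul_smul, inv_mul_cancel₀ ht.ne, one_smul]
  · have hmem : t • β ∈ rootBasisOf R K :=
      ⟨hαR, hker ▸ hwall, fun x hx => by simpa using mul_pos ht (hpos x hx)⟩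
    convert Submodule.smul_mem _ t⁻¹ (Submodule.subset_span hmem) using 1
    rw [smul_smul, inv_mul_cancel₀ ht.ne', one_smul]

variable [ContinuousAdd V] [ContinuousSMul ℝ V] [FiniteDimensional ℝ V]

theorem span_rootBasisOf_eq_top (hTits : IsTitsArrangement 𝒜 T)
    (hR : IsAssociatedRootSystem 𝒜 R) (hK : K ∈ chambersOf 𝒜 T) :
    Submodule.span ℝ (rootBasisOf R K) = ⊤ := by
  obtain ⟨b, hb⟩ := hTits.simplicial K hK
  subst hb
  rw [eq_top_iff, ← b.span_eq, Submodule.span_le]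
  rintro _ ⟨j, rfl⟩
  exact mem_span_rootBasisOf_of_isWall hTits hR hK (isWall_dualKer_basis b j) fun x hx => hx j

theorem linearIndependent_of_range_eq_rootBasisOf {ι : Type*} [Fintype ι]
    (hTits : IsTitsArrangement 𝒜 T) (hR : IsAssociatedRootSystem 𝒜 R) (hK : K ∈ chambersOf 𝒜 T)
    {S : ι → Dual ℝ V} (hS : Set.range S = rootBasisOf R K)
    (hcard : Fintype.card ι = finrank ℝ V) : LinearIndependent ℝ S :=
  linearIndependent_of_top_le_span_of_card_eq_finrank
    (by rw [hS, span_rootBasisOf_eq_top hTits hR hK]) (by rw [hcard, Subspace.dual_finrank_eq])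

end RootBasis

theorem statement_4_general {r : ℕ} (𝒜 : Set (Set (Vr r))) (T : Set (Vr r))
    (R : Set (Module.Dual ℝ (Vr r)))
    (hTits : IsTitsArrangement 𝒜 T) (hR : IsAssociatedRootSystem 𝒜 R)
    (ind : {K : Set (Vr r) // K ∈ chambersOf 𝒜 T} → Fin r → Module.Dual ℝ (Vr r))
    (hind : ∀ K, Function.Injective (ind K) ∧ Set.range (ind K) = rootBasisOf R K.1)
    (ρ : Fin r → {K : Set (Vr r) // K ∈ chambersOf 𝒜 T} →
      {K : Set (Vr r) // K ∈ chambersOf 𝒜 T})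
    (hcompat : ∀ i K, ind (ρ i K) i = -(ind K i) ∧
      ∀ j, ind (ρ i K) j ∈ Submodule.span ℝ {ind K j, ind K i})
    (C : {K : Set (Vr r) // K ∈ chambersOf 𝒜 T} → Matrix (Fin r) (Fin r) ℤ)
    (hC : ∀ K i j, ind (ρ i K) j = ind K j - C K i j • ind K i) :
    CGSimplyConnected ρ C :=
  cgSimplyConnected_of_linearIndependent (fun i K => (hcompat i K).1) hC fun K =>
    (linearIndependent_of_range_eq_rootBasisOf hTits hR K.2 (hind K).2
      (by simp)).restrict_scalars' ℤ

/-- the Cartan graph `𝒞(𝒜,T,R)` of a crystallographic Tits arrangement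
is simply connected: for every chamber `K` the only morphism in `Hom(K,K)` of its Weyl
groupoid is the identity. -/
theorem statement_4 {r : ℕ} (𝒜 : Set (Set (Vr r))) (T : Set (Vr r))
    (R : Set (Module.Dual ℝ (Vr r)))
    (hTits : IsTitsArrangement 𝒜 T) (hR : IsAssociatedRootSystem 𝒜 R)
    (hcrys : IsCrystallographic 𝒜 T R)
    (ind : {K : Set (Vr r) // K ∈ chambersOf 𝒜 T} → Fin r → Module.Dual ℝ (Vr r))
    (hind : ∀ K, Function.Injective (ind K) ∧ Set.range (ind K) = rootBasisOf R K.1)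
    (ρ : Fin r → {K : Set (Vr r) // K ∈ chambersOf 𝒜 T} →
      {K : Set (Vr r) // K ∈ chambersOf 𝒜 T})
    (hρ : ∀ i K, ρ i K ≠ K ∧
      (Submodule.span ℝ (closure K.1 ∩ closure (ρ i K).1) : Set (Vr r)) =
        dualKer (ind K i))
    (hcompat : ∀ i K, ind (ρ i K) i = -(ind K i) ∧
      ∀ j, ind (ρ i K) j ∈ Submodule.span ℝ {ind K j, ind K i})
    (C : {K : Set (Vr r) // K ∈ chambersOf 𝒜 T} → Matrix (Fin r) (Fin r) ℤ)
    (hC : ∀ K i j, ind (ρ i K) j = ind K j - C K i j • ind K i) :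
    CGSimplyConnected ρ C :=
  statement_4_general 𝒜 T R hTits hR ind hind ρ hcompat C hC
end
end

section
/- Let 𝒞 be a connected simply connected Cartan graph whose real roots form a root system of type 𝒞, fix a ∈ A, and form the geometric realization data ψ, R = ψ((R^re)^a), 𝒜, and the cones K^b for b ∈ A. Then for every b ∈ A, the set K^b is an open simplicial cone, and no hyperplane H ∈ 𝒜 meets K^b. -/
open Set

noncomputable section

section GeometricRealization

variable {r : ℕ} {A : Type*}

/-- The map `ψ : ℤ^r → V*` determined by a basis `(β_i)` of `V*`: `ψ(α_i) = β_i`. -/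
def psiMap (bβ : Module.Basis (Fin r) ℝ (Module.Dual ℝ (Vr r))) (v : Fin r → ℤ) :
    Module.Dual ℝ (Vr r) :=
  ∑ i, (v i : ℝ) • bβ i

/-- The open cone `K^b` attached to the (unique) morphism `u ∈ Hom(b,a)`:
`K^b = ⋂_i ψ_b(α_i)^+` where `ψ_b(α_i) = ψ(u(α_i))`. -/
def Kch (bβ : Module.Basis (Fin r) ℝ (Module.Dual ℝ (Vr r)))
    (u : (Fin r → ℤ) → (Fin r → ℤ)) : Set (Vr r) :=
  {x | ∀ i : Fin r, 0 < psiMap bβ (u (Pi.single i 1)) x}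

/-- The root system `R = ψ((R^re)^a)` of the geometric realization. -/
def geoR (ρ : Fin r → A → A) (C : A → Matrix (Fin r) (Fin r) ℤ) (a : A)
    (bβ : Module.Basis (Fin r) ℝ (Module.Dual ℝ (Vr r))) : Set (Module.Dual ℝ (Vr r)) :=
  psiMap bβ '' realRootsAt ρ C a

/-- The arrangement `𝒜 = {ker α | α ∈ R}` of the geometric realization. -/
def geoA (ρ : Fin r → A → A) (C : A → Matrix (Fin r) (Fin r) ℤ) (a : A)
    (bβ : Module.Basis (Fin r) ℝ (Module.Dual ℝ (Vr r))) : Set (Set (Vr r)) :=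
  {H | ∃ α ∈ geoR ρ C a bβ, H = dualKer α}

/-- Adjacency of objects `b, c` of the Cartan graph: the corresponding chambers `K^b`, `K^c`
are distinct and the span of `cl(K^b) ∩ cl(K^c)` is the wall `ker ψ_b(α_i)` for some `i`. -/
def objAdj (ρ : Fin r → A → A) (C : A → Matrix (Fin r) (Fin r) ℤ) (a : A)
    (bβ : Module.Basis (Fin r) ℝ (Module.Dual ℝ (Vr r))) (b c : A) : Prop :=
  ∃ u u' : (Fin r → ℤ) → (Fin r → ℤ), WeylHom ρ C b a u ∧ WeylHom ρ C c a u' ∧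
    ∃ i : Fin r, Kch bβ u ≠ Kch bβ u' ∧
      (Submodule.span ℝ (closure (Kch bβ u) ∩ closure (Kch bβ u')) : Set (Vr r)) =
        dualKer (psiMap bβ (u (Pi.single i 1)))

/-- The gallery distance between the chambers `K^b` and `K^{b'}`: the minimal length of a
gallery from `K^b` to `K^{b'}`. -/
def galleryDist (ρ : Fin r → A → A) (C : A → Matrix (Fin r) (Fin r) ℤ) (a : A)
    (bβ : Module.Basis (Fin r) ℝ (Module.Dual ℝ (Vr r))) (b b' : A) : ℕ :=
  sInf {m : ℕ | ∃ g : ℕ → A, g 0 = b ∧ g m = b' ∧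
    ∀ k < m, objAdj ρ C a bβ (g k) (g (k + 1))}

end GeometricRealization

/-!
Every morphism `u ∈ Hom(b, a)` of the Weyl groupoid is additive and invertible, so the
functionals `ψ(u(α_i))` are the image of the basis `(β_i)` under an invertible map, hence a basis
of `V*`, and `K^b` is the open simplicial cone they cut out. A root `v` at `a` pulls back to the
root `u⁻¹(v)` at `b`, which by (R1) and (R2) is nonzero with coordinates of one sign. As
`ψ(v) = ∑ u⁻¹(v)_i ψ(u(α_i))`, the functional `ψ(v)` is strictly positive or strictly negative on
`K^b`, so its kernel misses `K^b`.
-/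

section WeylGroupoid

variable {I A : Type*} [Fintype I] [DecidableEq I]

lemma gcmSigma_add (C : Matrix I I ℤ) (i : I) (v w : I → ℤ) :
    gcmSigma C i (v + w) = gcmSigma C i v + gcmSigma C i w := by
  funext k
  simp only [gcmSigma, Pi.add_apply, mul_add, Finset.sum_add_distrib]
  split <;> ring

lemma gcmSigma_gcmSigma {C : Matrix I I ℤ} {i : I} (hC : C i i = 2) (v : I → ℤ) :
    gcmSigma C i (gcmSigma C i v) = v := by
  funext k
  by_cases hk : k = i
  · subst hk
    simp only [gcmSigma, mul_sub, mul_ite, mul_zero, Finset.sum_sub_distrib,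
      Finset.sum_ite_eq' Finset.univ, Finset.mem_univ, if_true, hC]
    ring
  · simp [gcmSigma, hk]

variable {ρ : I → A → A} {C : A → Matrix I I ℤ}

lemma WeylHom.trans {a b c : A} {f g : (I → ℤ) → (I → ℤ)}
    (hf : WeylHom ρ C a b f) (hg : WeylHom ρ C b c g) : WeylHom ρ C a c (g ∘ f) := by
  induction hg with
  | id => exact hf
  | comp i _ ih => exact ih.comp i

def WeylHom.toAddMonoidHom {a b : A} {u : (I → ℤ) → (I → ℤ)} (hu : WeylHom ρ C a b u) :
    (I → ℤ) →+ (I → ℤ) :=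
  AddMonoidHom.mk' u <| by
    induction hu with
    | id => exact fun _ _ => rfl
    | comp i _ ih => intro v w; simp only [Function.comp_apply, ih, gcmSigma_add]

/-- The Weyl groupoid is a groupoid: `σ_i^{ρ_i(c)} ∈ Hom(ρ_i(c), c)` inverts `σ_i^c`, since
`C^c` and `C^{ρ_i(c)}` share their `i`-th row and `c_{ii} = 2`. -/
lemma WeylHom.exists_inverse (hCG : IsCartanGraph ρ C) {a b : A}
    {u : (I → ℤ) → (I → ℤ)} (hu : WeylHom ρ C a b u) :
    ∃ g, WeylHom ρ C b a g ∧ Function.LeftInverse u g ∧ Function.RightInverse u g := by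
  induction hu with
  | id => exact ⟨_root_.id, WeylHom.id _, fun _ => rfl, fun _ => rfl⟩
  | @comp b f i _ ih =>
    obtain ⟨g, hg, hfg, hgf⟩ := ih
    have hrow : gcmSigma (C (ρ i b)) i = gcmSigma (C b) i := by
      funext v k
      simp only [gcmSigma, ← hCG.2.2.2 b i]
    have hσ := gcmSigma_gcmSigma (C := C b) (i := i) ((hCG.2.1 b).1 i)
    have hback : WeylHom ρ C (ρ i b) b (gcmSigma (C (ρ i b)) i ∘ _root_.id) := by
      simpa only [hCG.2.2.1 i b] using (WeylHom.id (ρ := ρ) (C := C) (ρ i b)).comp i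
    refine ⟨g ∘ gcmSigma (C (ρ i b)) i, hback.trans hg, fun v => ?_, fun v => ?_⟩ <;>
      simp only [Function.comp_apply, hrow, hfg _, hgf _, hσ]

lemma WeylHom.apply_mem_realRootsAt {a b : A} {g : (I → ℤ) → (I → ℤ)}
    (hg : WeylHom ρ C a b g) {v : I → ℤ} (hv : v ∈ realRootsAt ρ C a) :
    g v ∈ realRootsAt ρ C b := by
  obtain ⟨c, f, j, hf, rfl⟩ := hv
  exact ⟨c, g ∘ f, j, hf.trans hg, rfl⟩

lemma IsRootSystemOfType.nonneg_or_nonpos {R : A → Set (I → ℤ)}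
    (hRS : IsRootSystemOfType ρ C R) {a : A} {v : I → ℤ} (hv : v ∈ R a) :
    (∀ i, 0 ≤ v i) ∨ ∀ i, v i ≤ 0 := by
  rw [hRS.1 a] at hv
  rcases hv with ⟨_, hpos⟩ | ⟨w, ⟨_, hpos⟩, rfl⟩
  · exact .inl hpos
  · exact .inr fun i => neg_nonpos.2 (hpos i)

lemma IsRootSystemOfType.zero_notMem {R : A → Set (I → ℤ)}
    (hRS : IsRootSystemOfType ρ C R) (a : A) (i : I) : (0 : I → ℤ) ∉ R a := by
  intro h0
  have : (0 : I → ℤ) ∈ {v ∈ R a | ∃ n : ℤ, v = n • Pi.single i 1} := ⟨h0, 0, by simp⟩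
  rw [hRS.2.1 a i] at this
  rcases this with h | h <;> simpa using congrFun h i

end WeylGroupoid

section Cones

variable {V ι : Type*} [AddCommGroup V] [Module ℝ V]

lemma isOpenSimplicialCone_of_basis [FiniteDimensional ℝ V]
    (B : Module.Basis ι ℝ (Module.Dual ℝ V)) : IsOpenSimplicialCone {x : V | ∀ i, 0 < B i x} := by
  classical
  let e := B.indexEquiv (Module.finBasis ℝ V).dualBasis
  refine ⟨B.reindex e, Set.ext fun x => ?_⟩
  simp only [Set.mem_ofPred_eq, Module.Basis.reindex_apply]
  exact e.symm.forall_congr_right.symm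

lemma sum_smul_apply_pos [Fintype ι] {c : ι → Module.Dual ℝ V} {w : ι → ℝ} (hw : ∀ i, 0 ≤ w i)
    (hw0 : w ≠ 0) {x : V} (hx : ∀ i, 0 < c i x) : 0 < (∑ i, w i • c i) x := by
  obtain ⟨i₀, hi₀⟩ := Function.ne_iff.1 hw0
  simp only [LinearMap.sum_apply, LinearMap.smul_apply, smul_eq_mul]
  exact Finset.sum_pos' (fun i _ => mul_nonneg (hw i) (hx i).le)
    ⟨i₀, Finset.mem_univ _, mul_pos ((hw i₀).lt_of_ne' hi₀) (hx i₀)⟩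

lemma sum_intCast_smul_apply_ne_zero [Fintype ι] {c : ι → Module.Dual ℝ V} {w : ι → ℤ}
    (hw : (∀ i, 0 ≤ w i) ∨ ∀ i, w i ≤ 0) (hw0 : w ≠ 0) {x : V} (hx : ∀ i, 0 < c i x) :
    (∑ i, (w i : ℝ) • c i) x ≠ 0 := by
  rcases hw with hw | hw
  · refine (sum_smul_apply_pos (fun i => Int.cast_nonneg (hw i)) ?_ hx).ne'
    exact fun h => hw0 (funext fun i => by simpa using congrFun h i)
  · have hneg := sum_smul_apply_pos (w := fun i => -(w i : ℝ))
      (fun i => neg_nonneg.2 (Int.cast_nonpos.2 (hw i)))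
      (fun h => hw0 (funext fun i => by simpa using congrFun h i)) hx
    simp only [LinearMap.sum_apply, LinearMap.smul_apply, smul_eq_mul, neg_mul,
      Finset.sum_neg_distrib] at hneg ⊢
    exact (neg_pos.1 hneg).ne

end Cones

section GeometricRealization

variable {r : ℕ} {A : Type*} {ρ : Fin r → A → A} {C : A → Matrix (Fin r) (Fin r) ℤ}
  (bβ : Module.Basis (Fin r) ℝ (Module.Dual ℝ (Vr r)))

lemma psiMap_single (j : Fin r) : psiMap bβ (Pi.single j 1) = bβ j := by
  simp [psiMap, Pi.single_apply]

def psiMapHom : (Fin r → ℤ) →+ Module.Dual ℝ (Vr r) :=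
  AddMonoidHom.mk' (psiMap bβ) fun v w => by
    simp only [psiMap, Pi.add_apply, Int.cast_add, add_smul, Finset.sum_add_distrib]

lemma psiMap_weylHom_apply {a b : A} {u : (Fin r → ℤ) → (Fin r → ℤ)}
    (hu : WeylHom ρ C b a u) (w : Fin r → ℤ) :
    psiMap bβ (u w) = ∑ i, (w i : ℝ) • psiMap bβ (u (Pi.single i 1)) := by
  let f := (psiMapHom bβ).comp hu.toAddMonoidHom
  have hw : w = ∑ i, w i • (Pi.single i 1 : Fin r → ℤ) := by
    simp only [← Pi.single_smul, smul_eq_mul, mul_one, Finset.univ_sum_single]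
  change f w = ∑ i, (w i : ℝ) • f (Pi.single i 1)
  conv_lhs => rw [hw]
  simp only [map_sum, map_zsmul]
  exact Finset.sum_congr rfl fun i _ => (Int.cast_smul_eq_zsmul ℝ _ _).symm

lemma exists_basis_eq_psiMap_weylHom (hCG : IsCartanGraph ρ C) {a b : A}
    {u : (Fin r → ℤ) → (Fin r → ℤ)} (hu : WeylHom ρ C b a u) :
    ∃ B : Module.Basis (Fin r) ℝ (Module.Dual ℝ (Vr r)),
      ⇑B = fun i => psiMap bβ (u (Pi.single i 1)) := by
  obtain ⟨g, -, hug, -⟩ := hu.exists_inverse hCG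
  have hspan : ⊤ ≤ Submodule.span ℝ (Set.range fun i => psiMap bβ (u (Pi.single i 1))) := by
    rw [← bβ.span_eq, Submodule.span_le]
    rintro - ⟨j, rfl⟩
    rw [← psiMap_single, ← hug (Pi.single j 1), psiMap_weylHom_apply bβ hu]
    exact Submodule.sum_mem _ fun i _ => Submodule.smul_mem _ _ (Submodule.subset_span ⟨i, rfl⟩)
  have hcard : Fintype.card (Fin r) = Module.finrank ℝ (Module.Dual ℝ (Vr r)) := by
    rw [Module.finrank_eq_card_basis bβ]
  exact ⟨_, coe_basisOfTopLeSpanOfCardEqFinrank _ hspan hcard⟩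

lemma isOpenSimplicialCone_Kch (hCG : IsCartanGraph ρ C) {a b : A}
    {u : (Fin r → ℤ) → (Fin r → ℤ)} (hu : WeylHom ρ C b a u) :
    IsOpenSimplicialCone (Kch bβ u) := by
  obtain ⟨B, hB⟩ := exists_basis_eq_psiMap_weylHom bβ hCG hu
  simpa only [Kch, hB] using isOpenSimplicialCone_of_basis B

lemma dualKer_psiMap_inter_Kch (hCG : IsCartanGraph ρ C)
    (hRS : IsRootSystemOfType ρ C (realRootsAt ρ C)) {a b : A}
    {u : (Fin r → ℤ) → (Fin r → ℤ)} (hu : WeylHom ρ C b a u) {v : Fin r → ℤ}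
    (hv : v ∈ realRootsAt ρ C a) : dualKer (psiMap bβ v) ∩ Kch bβ u = ∅ := by
  obtain ⟨g, hg, hug, -⟩ := hu.exists_inverse hCG
  have hgv : g v ∈ realRootsAt ρ C b := hg.apply_mem_realRootsAt hv
  obtain ⟨-, -, j, -, -⟩ := hv
  have hψv : psiMap bβ v = ∑ i, (g v i : ℝ) • psiMap bβ (u (Pi.single i 1)) := by
    rw [← psiMap_weylHom_apply bβ hu, hug]
  refine Set.eq_empty_of_forall_notMem fun x ⟨hxH, hxK⟩ => ?_
  refine sum_intCast_smul_apply_ne_zero (hRS.nonneg_or_nonpos hgv) ?_ hxK (hψv ▸ hxH)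
  exact fun h0 => hRS.zero_notMem b j (h0 ▸ hgv)

end GeometricRealization

theorem statement_8_general {r : ℕ} {A : Type*}
    (ρ : Fin r → A → A) (C : A → Matrix (Fin r) (Fin r) ℤ)
    (hCG : IsCartanGraph ρ C)
    (hRS : IsRootSystemOfType ρ C (realRootsAt ρ C))
    (a : A) (bβ : Module.Basis (Fin r) ℝ (Module.Dual ℝ (Vr r)))
    (b : A) (u : (Fin r → ℤ) → (Fin r → ℤ)) (hu : WeylHom ρ C b a u) :
    IsOpenSimplicialCone (Kch bβ u) ∧
    ∀ H ∈ geoA ρ C a bβ, H ∩ Kch bβ u = ∅ := by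
  refine ⟨isOpenSimplicialCone_Kch bβ hCG hu, ?_⟩
  rintro H ⟨-, ⟨v, hv, rfl⟩, rfl⟩
  exact dualKer_psiMap_inter_Kch bβ hCG hRS hu hv

/-- in the geometric realization of a connected simply connected Cartan
graph `𝒞` whose real roots form a root system of type `𝒞`, for every `b ∈ A` (with
`{u} = Hom(b,a)`) the set `K^b` is an open simplicial cone, and no hyperplane `H ∈ 𝒜`
meets `K^b`. -/
theorem statement_8 {r : ℕ} {A : Type*}
    (ρ : Fin r → A → A) (C : A → Matrix (Fin r) (Fin r) ℤ)
    (hCG : IsCartanGraph ρ C) (hconn : CGConnected ρ C) (hsc : CGSimplyConnected ρ C)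
    (hRS : IsRootSystemOfType ρ C (realRootsAt ρ C))
    (a : A) (bβ : Module.Basis (Fin r) ℝ (Module.Dual ℝ (Vr r)))
    (b : A) (u : (Fin r → ℤ) → (Fin r → ℤ)) (hu : WeylHom ρ C b a u) :
    IsOpenSimplicialCone (Kch bβ u) ∧
    ∀ H ∈ geoA ρ C a bβ, H ∩ Kch bβ u = ∅ :=
  statement_8_general ρ C hCG hRS a bβ b u hu
end
end
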